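/- arXiv:1906.10828 — 2 statements merged into one kernel-verified Lean document; each statement's English description precedes it below -/
import Mathlib

section
/- On ℝ³, with X, Y, Z, Δ_H, Γ, Γ₂^H as above, for every smooth f: ℝ³ → ℝ and every ε > 0 one has Γ₂^H(f) ≥ (1/2)(Δ_H f)² + (1/2)(Zf)² − ε Γ(Zf) − (1/ε) Γ(f), where Γ(Zf) = (XZf)² + (YZf)². -/
open MeasureTheory

noncomputable def px (f : ℝ × ℝ × ℝ → ℝ) (p : ℝ × ℝ × ℝ) : ℝ := fderiv ℝ f p (1, 0, 0)
noncomputable def py (f : ℝ × ℝ × ℝ → ℝ) (p : ℝ × ℝ × ℝ) : ℝ := fderiv ℝ f p (0, 1, 0)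
noncomputable def pz (f : ℝ × ℝ × ℝ → ℝ) (p : ℝ × ℝ × ℝ) : ℝ := fderiv ℝ f p (0, 0, 1)

/-- X = ∂_x − (y/2)∂_z -/
noncomputable def Xv (f : ℝ × ℝ × ℝ → ℝ) (p : ℝ × ℝ × ℝ) : ℝ := px f p - p.2.1 / 2 * pz f p
/-- Y = ∂_y + (x/2)∂_z -/
noncomputable def Yv (f : ℝ × ℝ × ℝ → ℝ) (p : ℝ × ℝ × ℝ) : ℝ := py f p + p.1 / 2 * pz f p
/-- Z = ∂_z -/
noncomputable def Zv (f : ℝ × ℝ × ℝ → ℝ) (p : ℝ × ℝ × ℝ) : ℝ := pz f p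
/-- dilation vector field D = (x/2)∂_x + (y/2)∂_y + z∂_z -/
noncomputable def Dv (f : ℝ × ℝ × ℝ → ℝ) (p : ℝ × ℝ × ℝ) : ℝ :=
  p.1 / 2 * px f p + p.2.1 / 2 * py f p + p.2.2 * pz f p
/-- sub-Laplacian Δ_H = X² + Y² -/
noncomputable def DeltaH (f : ℝ × ℝ × ℝ → ℝ) (p : ℝ × ℝ × ℝ) : ℝ := Xv (Xv f) p + Yv (Yv f) p
/-- Ornstein–Uhlenbeck operator L = Δ_H − 2D -/
noncomputable def Lop (f : ℝ × ℝ × ℝ → ℝ) (p : ℝ × ℝ × ℝ) : ℝ := DeltaH f p - 2 * Dv f p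
/-- carré du champ Γ(f) = (Xf)² + (Yf)² -/
noncomputable def Gam (f : ℝ × ℝ × ℝ → ℝ) (p : ℝ × ℝ × ℝ) : ℝ := (Xv f p) ^ 2 + (Yv f p) ^ 2
/-- vertical carré du champ Γ^Z(f) = (Zf)² -/
noncomputable def GamZ (f : ℝ × ℝ × ℝ → ℝ) (p : ℝ × ℝ × ℝ) : ℝ := (Zv f p) ^ 2


noncomputable def pd (v : ℝ×ℝ×ℝ) (g : ℝ×ℝ×ℝ → ℝ) (p : ℝ×ℝ×ℝ) : ℝ := fderiv ℝ g p v

lemma pd_contDiff (v : ℝ×ℝ×ℝ) {g : ℝ×ℝ×ℝ → ℝ} (hg : ContDiff ℝ (⊤ : ℕ∞) g) :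
    ContDiff ℝ (⊤ : ℕ∞) (pd v g) :=
  (hg.fderiv_right (by simp)).clm_apply contDiff_const

lemma pd_diff (v : ℝ×ℝ×ℝ) {g : ℝ×ℝ×ℝ → ℝ} (hg : ContDiff ℝ (⊤ : ℕ∞) g) :
    Differentiable ℝ (pd v g) := (pd_contDiff v hg).differentiable (by simp)

lemma pd_comm {g : ℝ×ℝ×ℝ → ℝ} (hg : ContDiff ℝ (⊤ : ℕ∞) g) (v w : ℝ×ℝ×ℝ) (p : ℝ×ℝ×ℝ) :
    pd v (pd w g) p = pd w (pd v g) p := by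
  have hd : DifferentiableAt ℝ (fderiv ℝ g) p :=
    ((hg.fderiv_right (m := 1) (WithTop.coe_le_coe.mpr le_top)).differentiable one_ne_zero) p
  have key : ∀ u u' : ℝ×ℝ×ℝ, pd u (pd u' g) p = fderiv ℝ (fderiv ℝ g) p u u' := by
    intro u u'
    show fderiv ℝ (fun q => (fderiv ℝ g q) u') p u = _
    rw [fderiv_clm_apply hd (differentiableAt_const u')]
    simp
  rw [key, key]
  exact (hg.contDiffAt.isSymmSndFDerivAt (by rw [minSmoothness_of_isRCLikeNormedField]; exact WithTop.coe_le_coe.mpr le_top)) v w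

lemma pd_add (v p : ℝ×ℝ×ℝ) {g h : ℝ×ℝ×ℝ → ℝ} (hg : DifferentiableAt ℝ g p)
    (hh : DifferentiableAt ℝ h p) :
    pd v (fun q => g q + h q) p = pd v g p + pd v h p := by
  simp [pd, fderiv_fun_add hg hh]

lemma pd_sub (v p : ℝ×ℝ×ℝ) {g h : ℝ×ℝ×ℝ → ℝ} (hg : DifferentiableAt ℝ g p)
    (hh : DifferentiableAt ℝ h p) :
    pd v (fun q => g q - h q) p = pd v g p - pd v h p := by
  simp [pd, fderiv_fun_sub hg hh]

lemma pd_mul (v p : ℝ×ℝ×ℝ) {g h : ℝ×ℝ×ℝ → ℝ} (hg : DifferentiableAt ℝ g p)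
    (hh : DifferentiableAt ℝ h p) :
    pd v (fun q => g q * h q) p = pd v g p * h p + g p * pd v h p := by
  simp [pd, fderiv_fun_mul hg hh]
  ring

lemma pd_yhalf (v p : ℝ×ℝ×ℝ) : pd v (fun q : ℝ×ℝ×ℝ => q.2.1/2) p = v.2.1/2 := by
  have h : (fun q : ℝ×ℝ×ℝ => q.2.1/2)
      = ⇑((2:ℝ)⁻¹ • (ContinuousLinearMap.fst ℝ ℝ ℝ).comp (ContinuousLinearMap.snd ℝ ℝ (ℝ×ℝ))) := by
    funext q; simp; ring
  rw [pd, h, ContinuousLinearMap.fderiv]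
  simp; ring

lemma pd_xhalf (v p : ℝ×ℝ×ℝ) : pd v (fun q : ℝ×ℝ×ℝ => q.1/2) p = v.1/2 := by
  have h : (fun q : ℝ×ℝ×ℝ => q.1/2)
      = ⇑((2:ℝ)⁻¹ • (ContinuousLinearMap.fst ℝ ℝ (ℝ×ℝ))) := by
    funext q; simp; ring
  rw [pd, h, ContinuousLinearMap.fderiv]
  simp; ring


lemma Xv_def (g : ℝ×ℝ×ℝ → ℝ) :
    Xv g = fun q => pd (1,0,0) g q - (fun q : ℝ×ℝ×ℝ => q.2.1/2) q * pd (0,0,1) g q := rfl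

lemma Yv_def (g : ℝ×ℝ×ℝ → ℝ) :
    Yv g = fun q => pd (0,1,0) g q + (fun q : ℝ×ℝ×ℝ => q.1/2) q * pd (0,0,1) g q := rfl

lemma Zv_def (g : ℝ×ℝ×ℝ → ℝ) : Zv g = pd (0,0,1) g := rfl

lemma diff_yhalf : Differentiable ℝ (fun q : ℝ×ℝ×ℝ => q.2.1/2) := by fun_prop
lemma diff_xhalf : Differentiable ℝ (fun q : ℝ×ℝ×ℝ => q.1/2) := by fun_prop
lemma cd_yhalf : ContDiff ℝ (⊤ : ℕ∞) (fun q : ℝ×ℝ×ℝ => q.2.1/2) :=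
  (contDiff_fst.comp contDiff_snd).div_const 2
lemma cd_xhalf : ContDiff ℝ (⊤ : ℕ∞) (fun q : ℝ×ℝ×ℝ => q.1/2) :=
  contDiff_fst.div_const 2

lemma Xv_contDiff {g : ℝ×ℝ×ℝ → ℝ} (hg : ContDiff ℝ (⊤ : ℕ∞) g) : ContDiff ℝ (⊤ : ℕ∞) (Xv g) := by
  rw [Xv_def]
  exact (pd_contDiff _ hg).sub (cd_yhalf.mul (pd_contDiff _ hg))

lemma Yv_contDiff {g : ℝ×ℝ×ℝ → ℝ} (hg : ContDiff ℝ (⊤ : ℕ∞) g) : ContDiff ℝ (⊤ : ℕ∞) (Yv g) := by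
  rw [Yv_def]
  exact (pd_contDiff _ hg).add (cd_xhalf.mul (pd_contDiff _ hg))

lemma Zv_contDiff {g : ℝ×ℝ×ℝ → ℝ} (hg : ContDiff ℝ (⊤ : ℕ∞) g) : ContDiff ℝ (⊤ : ℕ∞) (Zv g) :=
  pd_contDiff _ hg

lemma pd_Xv {g : ℝ×ℝ×ℝ → ℝ} (hg : ContDiff ℝ (⊤ : ℕ∞) g) (v p : ℝ×ℝ×ℝ) :
    pd v (Xv g) p = pd v (pd (1,0,0) g) p - v.2.1/2 * pd (0,0,1) g p
      - p.2.1/2 * pd v (pd (0,0,1) g) p := by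
  rw [Xv_def, pd_sub v p (h := fun q => q.2.1/2 * pd (0,0,1) g q) (pd_diff _ hg p) ((diff_yhalf p).mul (pd_diff _ hg p)),
    pd_mul v p (diff_yhalf p) (pd_diff _ hg p), pd_yhalf]
  ring

lemma pd_Yv {g : ℝ×ℝ×ℝ → ℝ} (hg : ContDiff ℝ (⊤ : ℕ∞) g) (v p : ℝ×ℝ×ℝ) :
    pd v (Yv g) p = pd v (pd (0,1,0) g) p + v.1/2 * pd (0,0,1) g p
      + p.1/2 * pd v (pd (0,0,1) g) p := by
  rw [Yv_def, pd_add v p (h := fun q => q.1/2 * pd (0,0,1) g q) (pd_diff _ hg p) ((diff_xhalf p).mul (pd_diff _ hg p)),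
    pd_mul v p (diff_xhalf p) (pd_diff _ hg p), pd_xhalf]
  ring

lemma comm_XY {g : ℝ×ℝ×ℝ → ℝ} (hg : ContDiff ℝ (⊤ : ℕ∞) g) (p : ℝ×ℝ×ℝ) :
    Xv (Yv g) p = Yv (Xv g) p + Zv g p := by
  have h1 := pd_Yv hg (1,0,0) p
  have h2 := pd_Yv hg (0,0,1) p
  have h3 := pd_Xv hg (0,1,0) p
  have h4 := pd_Xv hg (0,0,1) p
  have c1 := pd_comm hg (1,0,0) (0,1,0) p
  have c2 := pd_comm hg (1,0,0) (0,0,1) p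
  have c3 := pd_comm hg (0,0,1) (0,1,0) p
  show pd (1,0,0) (Yv g) p - p.2.1/2 * pd (0,0,1) (Yv g) p
    = (pd (0,1,0) (Xv g) p + p.1/2 * pd (0,0,1) (Xv g) p) + pd (0,0,1) g p
  norm_num at h1 h2 h3 h4 c1 c2 c3 ⊢
  rw [h1, h2, h3, h4]
  linear_combination c1 + p.1/2 * c2 - p.2.1/2 * c3

lemma comm_XZ {g : ℝ×ℝ×ℝ → ℝ} (hg : ContDiff ℝ (⊤ : ℕ∞) g) (p : ℝ×ℝ×ℝ) :
    Xv (Zv g) p = Zv (Xv g) p := by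
  have h4 := pd_Xv hg (0,0,1) p
  have c2 := pd_comm hg (1,0,0) (0,0,1) p
  show pd (1,0,0) (Zv g) p - p.2.1/2 * pd (0,0,1) (Zv g) p = pd (0,0,1) (Xv g) p
  norm_num at h4 c2 ⊢
  rw [Zv_def, h4]
  linear_combination c2

lemma comm_YZ {g : ℝ×ℝ×ℝ → ℝ} (hg : ContDiff ℝ (⊤ : ℕ∞) g) (p : ℝ×ℝ×ℝ) :
    Yv (Zv g) p = Zv (Yv g) p := by
  have h4 := pd_Yv hg (0,0,1) p
  norm_num at h4
  show pd (0,1,0) (Zv g) p + p.1/2 * pd (0,0,1) (Zv g) p = pd (0,0,1) (Yv g) p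
  rw [Zv_def, h4]
  linear_combination pd_comm hg (0,1,0) (0,0,1) p

lemma Xv_add {g h : ℝ×ℝ×ℝ → ℝ} (hg : Differentiable ℝ g) (hh : Differentiable ℝ h)
    (p : ℝ×ℝ×ℝ) :
    Xv (fun q => g q + h q) p = Xv g p + Xv h p := by
  show pd (1,0,0) (fun q => g q + h q) p - p.2.1/2 * pd (0,0,1) (fun q => g q + h q) p = _
  rw [pd_add _ _ (hg p) (hh p), pd_add _ _ (hg p) (hh p)]
  show _ = (pd (1,0,0) g p - p.2.1/2 * pd (0,0,1) g p) + (pd (1,0,0) h p - p.2.1/2 * pd (0,0,1) h p)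
  ring

lemma Xv_mul {g h : ℝ×ℝ×ℝ → ℝ} (hg : Differentiable ℝ g) (hh : Differentiable ℝ h)
    (p : ℝ×ℝ×ℝ) :
    Xv (fun q => g q * h q) p = Xv g p * h p + g p * Xv h p := by
  show pd (1,0,0) (fun q => g q * h q) p - p.2.1/2 * pd (0,0,1) (fun q => g q * h q) p = _
  rw [pd_mul _ _ (hg p) (hh p), pd_mul _ _ (hg p) (hh p)]
  show _ = (pd (1,0,0) g p - p.2.1/2 * pd (0,0,1) g p) * h p
      + g p * (pd (1,0,0) h p - p.2.1/2 * pd (0,0,1) h p)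
  ring

lemma Yv_add {g h : ℝ×ℝ×ℝ → ℝ} (hg : Differentiable ℝ g) (hh : Differentiable ℝ h)
    (p : ℝ×ℝ×ℝ) :
    Yv (fun q => g q + h q) p = Yv g p + Yv h p := by
  show pd (0,1,0) (fun q => g q + h q) p + p.1/2 * pd (0,0,1) (fun q => g q + h q) p = _
  rw [pd_add _ _ (hg p) (hh p), pd_add _ _ (hg p) (hh p)]
  show _ = (pd (0,1,0) g p + p.1/2 * pd (0,0,1) g p) + (pd (0,1,0) h p + p.1/2 * pd (0,0,1) h p)
  ring

lemma Yv_sub {g h : ℝ×ℝ×ℝ → ℝ} (hg : Differentiable ℝ g) (hh : Differentiable ℝ h)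
    (p : ℝ×ℝ×ℝ) :
    Yv (fun q => g q - h q) p = Yv g p - Yv h p := by
  show pd (0,1,0) (fun q => g q - h q) p + p.1/2 * pd (0,0,1) (fun q => g q - h q) p = _
  rw [pd_sub _ _ (hg p) (hh p), pd_sub _ _ (hg p) (hh p)]
  show _ = (pd (0,1,0) g p + p.1/2 * pd (0,0,1) g p) - (pd (0,1,0) h p + p.1/2 * pd (0,0,1) h p)
  ring

lemma Yv_mul {g h : ℝ×ℝ×ℝ → ℝ} (hg : Differentiable ℝ g) (hh : Differentiable ℝ h)
    (p : ℝ×ℝ×ℝ) :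
    Yv (fun q => g q * h q) p = Yv g p * h p + g p * Yv h p := by
  show pd (0,1,0) (fun q => g q * h q) p + p.1/2 * pd (0,0,1) (fun q => g q * h q) p = _
  rw [pd_mul _ _ (hg p) (hh p), pd_mul _ _ (hg p) (hh p)]
  show _ = (pd (0,1,0) g p + p.1/2 * pd (0,0,1) g p) * h p
      + g p * (pd (0,1,0) h p + p.1/2 * pd (0,0,1) h p)
  ring

lemma Gamma2_identity (f : ℝ×ℝ×ℝ → ℝ) (hf : ContDiff ℝ (⊤ : ℕ∞) f) (p : ℝ×ℝ×ℝ) :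
    (1/2) * (DeltaH (Gam f) p -
        2 * (Xv f p * Xv (DeltaH f) p + Yv f p * Yv (DeltaH f) p))
      = (Xv (Xv f) p)^2 + (Xv (Yv f) p)^2 + (Yv (Xv f) p)^2 + (Yv (Yv f) p)^2
        - 2 * Xv f p * Yv (Zv f) p + 2 * Yv f p * Xv (Zv f) p := by
  have ha : ContDiff ℝ (⊤ : ℕ∞) (Xv f) := Xv_contDiff hf
  have hb : ContDiff ℝ (⊤ : ℕ∞) (Yv f) := Yv_contDiff hf
  have hz : ContDiff ℝ (⊤ : ℕ∞) (Zv f) := Zv_contDiff hf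
  have haa : ContDiff ℝ (⊤ : ℕ∞) (Xv (Xv f)) := Xv_contDiff ha
  have hab : ContDiff ℝ (⊤ : ℕ∞) (Xv (Yv f)) := Xv_contDiff hb
  have hba : ContDiff ℝ (⊤ : ℕ∞) (Yv (Xv f)) := Yv_contDiff ha
  have hbb : ContDiff ℝ (⊤ : ℕ∞) (Yv (Yv f)) := Yv_contDiff hb
  have da := ha.differentiable (by simp)
  have db := hb.differentiable (by simp)
  have daa := haa.differentiable (by simp)
  have dab := hab.differentiable (by simp)
  have dba := hba.differentiable (by simp)
  have dbb := hbb.differentiable (by simp)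
  -- Gam as explicit sum of products
  have hGam : Gam f = fun q => Xv f q * Xv f q + Yv f q * Yv f q := by
    funext q; rw [Gam]; ring
  have hXGam : Xv (Gam f)
      = fun q => (Xv (Xv f) q * Xv f q + Xv f q * Xv (Xv f) q)
        + (Xv (Yv f) q * Yv f q + Yv f q * Xv (Yv f) q) := by
    funext q
    rw [hGam, Xv_add (da.fun_mul da) (db.fun_mul db), Xv_mul da da, Xv_mul db db]
  have hYGam : Yv (Gam f)
      = fun q => (Yv (Xv f) q * Xv f q + Xv f q * Yv (Xv f) q)
        + (Yv (Yv f) q * Yv f q + Yv f q * Yv (Yv f) q) := by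
    funext q
    rw [hGam, Yv_add (da.fun_mul da) (db.fun_mul db), Yv_mul da da, Yv_mul db db]
  have eXX : Xv (Xv (Gam f)) p
      = (Xv (Xv (Xv f)) p * Xv f p + Xv (Xv f) p * Xv (Xv f) p
          + (Xv (Xv f) p * Xv (Xv f) p + Xv f p * Xv (Xv (Xv f)) p))
        + (Xv (Xv (Yv f)) p * Yv f p + Xv (Yv f) p * Xv (Yv f) p
          + (Xv (Yv f) p * Xv (Yv f) p + Yv f p * Xv (Xv (Yv f)) p)) := by
    rw [hXGam,
      Xv_add ((daa.fun_mul da).fun_add (da.fun_mul daa)) ((dab.fun_mul db).fun_add (db.fun_mul dab)),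
      Xv_add (daa.fun_mul da) (da.fun_mul daa), Xv_add (dab.fun_mul db) (db.fun_mul dab),
      Xv_mul daa da, Xv_mul da daa, Xv_mul dab db, Xv_mul db dab]
  have eYY : Yv (Yv (Gam f)) p
      = (Yv (Yv (Xv f)) p * Xv f p + Yv (Xv f) p * Yv (Xv f) p
          + (Yv (Xv f) p * Yv (Xv f) p + Xv f p * Yv (Yv (Xv f)) p))
        + (Yv (Yv (Yv f)) p * Yv f p + Yv (Yv f) p * Yv (Yv f) p
          + (Yv (Yv f) p * Yv (Yv f) p + Yv f p * Yv (Yv (Yv f)) p)) := by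
    rw [hYGam,
      Yv_add ((dba.fun_mul da).fun_add (da.fun_mul dba)) ((dbb.fun_mul db).fun_add (db.fun_mul dbb)),
      Yv_add (dba.fun_mul da) (da.fun_mul dba), Yv_add (dbb.fun_mul db) (db.fun_mul dbb),
      Yv_mul dba da, Yv_mul da dba, Yv_mul dbb db, Yv_mul db dbb]
  have hD : DeltaH f = fun q => Xv (Xv f) q + Yv (Yv f) q := rfl
  have eXD : Xv (DeltaH f) p = Xv (Xv (Xv f)) p + Xv (Yv (Yv f)) p := by
    rw [hD, Xv_add daa dbb]
  have eYD : Yv (DeltaH f) p = Yv (Xv (Xv f)) p + Yv (Yv (Yv f)) p := by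
    rw [hD, Yv_add daa dbb]
  -- commutator facts
  have hc2 : Xv (Yv f) = fun q => Yv (Xv f) q + Zv f q := funext fun q => comm_XY hf q
  have hc1 : Yv (Xv f) = fun q => Xv (Yv f) q - Zv f q := by
    funext q; have := comm_XY hf q; linarith
  have h5 : Yv (Yv (Xv f)) p = Xv (Yv (Yv f)) p - 2 * Yv (Zv f) p := by
    rw [hc1, Yv_sub (hab.differentiable (by simp)) (hz.differentiable (by simp))]
    have := comm_XY hb p
    have := comm_YZ hf p
    linarith
  have h6 : Xv (Xv (Yv f)) p = Yv (Xv (Xv f)) p + 2 * Xv (Zv f) p := by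
    rw [hc2, Xv_add (hba.differentiable (by simp)) (hz.differentiable (by simp))]
    have := comm_XY ha p
    have := comm_XZ hf p
    linarith
  have hDG : DeltaH (Gam f) p = Xv (Xv (Gam f)) p + Yv (Yv (Gam f)) p := rfl
  rw [hDG, eXX, eYY, eXD, eYD, h5, h6]
  ring

lemma quad_ineq (ε a b Xa Xb Ya Yb XZ YZ : ℝ) (hε : 0 < ε) :
    (1/2)*(Xa+Yb)^2 + (1/2)*(Xb-Ya)^2 - ε*(XZ^2+YZ^2) - (1/ε)*(a^2+b^2)
      ≤ Xa^2 + Xb^2 + Ya^2 + Yb^2 - 2*a*YZ + 2*b*XZ := by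
  have hne : ε ≠ 0 := hε.ne'
  have h1 : ε*XZ^2 + (1/ε)*b^2 + 2*b*XZ = (ε*XZ+b)^2/ε := by
    field_simp; ring
  have h2 : ε*YZ^2 + (1/ε)*a^2 - 2*a*YZ = (ε*YZ-a)^2/ε := by
    field_simp; ring
  have p1 : (0:ℝ) ≤ (ε*XZ+b)^2/ε := by positivity
  have p2 : (0:ℝ) ≤ (ε*YZ-a)^2/ε := by positivity
  nlinarith [sq_nonneg (Xa-Yb), sq_nonneg (Xb+Ya)]

theorem heisenberg_Gamma2H_lower_bound (f : ℝ × ℝ × ℝ → ℝ) (hf : ContDiff ℝ (⊤ : ℕ∞) f)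
    (p : ℝ × ℝ × ℝ) (ε : ℝ) (hε : 0 < ε) :
    (1 / 2) * (DeltaH f p) ^ 2 + (1 / 2) * (Zv f p) ^ 2
        - ε * ((Xv (Zv f) p) ^ 2 + (Yv (Zv f) p) ^ 2) - (1 / ε) * Gam f p ≤
      (1 / 2) * (DeltaH (Gam f) p -
        2 * (Xv f p * Xv (DeltaH f) p + Yv f p * Yv (DeltaH f) p)) := by
  rw [Gamma2_identity f hf p]
  have hZ : Zv f p = Xv (Yv f) p - Yv (Xv f) p := by
    have := comm_XY hf p; linarith
  have hD : DeltaH f p = Xv (Xv f) p + Yv (Yv f) p := rfl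
  have hG : Gam f p = (Xv f p)^2 + (Yv f p)^2 := rfl
  rw [hZ, hD, hG]
  exact quad_ineq ε (Xv f p) (Yv f p) (Xv (Xv f) p) (Xv (Yv f) p) (Yv (Xv f) p)
    (Yv (Yv f) p) (Xv (Zv f) p) (Yv (Zv f) p) hε
end

section
/- Let μ be a probability measure on a space Ω, let t > 0, α > 1, c > 0, d: Ω × Ω → [0,∞) measurable, and let F, G: Ω → [0,∞) be measurable functions satisfying the Harnack-type inequality F(x)^α ≤ G(y)·exp(c·d(x,y)²/(α−1)) for all x, y ∈ Ω, with ∫ G dμ = 1. Then for all x: F(x)^α · ∫ exp(−c·d(x,y)²/(α−1)) dμ(y) ≤ 1, and hence for β > α, ∫ F^β dμ ≤ ∬ exp((β/α)·(α/(α−1))·c·d(x,y)²) dμ(y) dμ(x), provided that ∫(∫exp(−c d(x,y)²/(α−1))dμ(y))^{−β/α}dμ(x) is bounded by the right-hand side via the inequality 1 ≤ (∫g dμ)(∫g⁻¹ dμ). -/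
/-!
Multiplying the Harnack inequality by `exp (-c d(x,y)² / (α - 1))` and integrating in `y` gives
the first claim. Raising it to the power `s = β / α` and using Hölder's inequality in the form
`(∫ g)⁻ˢ ≤ ∫ g⁻ˢ` for `g = exp (-c d(x,·)² / (α - 1))` bounds `F x ^ β` by
`∫ exp (s c d(x,y)² / (α - 1)) dμ(y)`, and `s / (α - 1) ≤ β / (α - 1)`.
-/

open MeasureTheory ENNReal Real

section

variable {Ω : Type*} [MeasurableSpace Ω] {μ : Measure Ω}

/-- Hölder's inequality with exponents `(s + 1) / s` and `s + 1`, applied to the product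
`f ^ (s / (s + 1)) * g ^ (s / (s + 1)) = 1`. -/
theorem one_le_lintegral_rpow_mul_lintegral_rpow [IsProbabilityMeasure μ] {f g : Ω → ℝ≥0∞}
    (hf : AEMeasurable f μ) (hg : AEMeasurable g μ) (hfg : ∀ᵐ x ∂μ, f x * g x = 1)
    {s : ℝ} (hs : 0 < s) :
    1 ≤ (∫⁻ x, f x ∂μ) ^ s * ∫⁻ x, g x ^ s ∂μ := by
  set p := (s + 1) / s
  set q := s + 1
  have hp : 0 < p := by positivity
  have hq : 0 < q := by positivity
  have hpq : p.HolderConjugate q := by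
    rw [Real.holderConjugate_iff]
    constructor
    · rw [lt_div_iff₀ hs]; linarith
    · simp only [p, q, inv_div]
      field_simp
  have hpq_div : 1 / p * q = s := by simp only [p, q]; field_simp
  have hholder := ENNReal.lintegral_mul_le_Lp_mul_Lq μ hpq (hf.pow_const (1 / p))
    (hg.pow_const (1 / p))
  have hone : ∫⁻ x, ((fun x ↦ f x ^ (1 / p)) * fun x ↦ g x ^ (1 / p)) x ∂μ = 1 := by
    rw [lintegral_congr_ae (g := fun _ ↦ 1)]
    · simp
    filter_upwards [hfg] with x hx
    simp only [Pi.mul_apply]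
    rw [← ENNReal.mul_rpow_of_nonneg _ _ (by positivity), hx, ENNReal.one_rpow]
  simp only [hone, ← ENNReal.rpow_mul, one_div_mul_cancel hp.ne', ENNReal.rpow_one,
    hpq_div] at hholder
  calc (1 : ℝ≥0∞) ≤ ((∫⁻ x, f x ∂μ) ^ (1 / p) * (∫⁻ x, g x ^ s ∂μ) ^ (1 / q)) ^ q := by
        simpa using ENNReal.rpow_le_rpow hholder hq.le
    _ = (∫⁻ x, f x ∂μ) ^ s * ∫⁻ x, g x ^ s ∂μ := by
        rw [ENNReal.mul_rpow_of_nonneg _ _ hq.le, ← ENNReal.rpow_mul, ← ENNReal.rpow_mul, hpq_div,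
          one_div_mul_cancel hq.ne', ENNReal.rpow_one]

theorem mul_integral_exp_neg_le_integral {a : ℝ} {G u : Ω → ℝ}
    (hint : Integrable (fun y ↦ exp (-u y)) μ) (hG : Integrable G μ)
    (h : ∀ y, a ≤ G y * exp (u y)) :
    a * ∫ y, exp (-u y) ∂μ ≤ ∫ y, G y ∂μ := by
  rw [← integral_const_mul]
  refine integral_mono (hint.const_mul a) hG fun y ↦ ?_
  calc a * exp (-u y) ≤ G y * exp (u y) * exp (-u y) := by gcongr; exact h y
    _ = G y := by rw [mul_assoc, ← Real.exp_add, add_neg_cancel, Real.exp_zero, mul_one]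

theorem ofReal_rpow_le_lintegral_exp_mul [IsProbabilityMeasure μ] {u : Ω → ℝ}
    (hu : AEMeasurable u μ) (hint : Integrable (fun y ↦ exp (-u y)) μ) {a s : ℝ} (ha : 0 ≤ a)
    (hs : 0 < s) (hau : a * ∫ y, exp (-u y) ∂μ ≤ 1) :
    ENNReal.ofReal (a ^ s) ≤ ∫⁻ y, ENNReal.ofReal (exp (s * u y)) ∂μ := by
  set K := ∫⁻ y, ENNReal.ofReal (exp (-u y)) ∂μ
  have hK : ENNReal.ofReal (∫ y, exp (-u y) ∂μ) = K :=
    ofReal_integral_eq_lintegral_ofReal hint (ae_of_all _ fun y ↦ (exp_pos _).le)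
  have hK0 : K ^ s ≠ 0 := by
    rw [← hK]
    exact (ENNReal.rpow_pos (ENNReal.ofReal_pos.mpr (integral_exp_pos hint)) ofReal_ne_top).ne'
  have hKtop : K ^ s ≠ ⊤ := by rw [← hK]; exact ENNReal.rpow_ne_top_of_nonneg hs.le ofReal_ne_top
  have hholder : 1 ≤ K ^ s * ∫⁻ y, ENNReal.ofReal (exp (s * u y)) ∂μ := by
    have hprod : ∀ y, ENNReal.ofReal (exp (-u y)) * ENNReal.ofReal (exp (u y)) = 1 := fun y ↦ by
      rw [← ENNReal.ofReal_mul (exp_pos _).le, ← Real.exp_add, neg_add_cancel, Real.exp_zero,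
        ENNReal.ofReal_one]
    have hpow : ∀ y, ENNReal.ofReal (exp (u y)) ^ s = ENNReal.ofReal (exp (s * u y)) := fun y ↦ by
      rw [ENNReal.ofReal_rpow_of_nonneg (exp_pos _).le hs.le, ← Real.exp_mul, mul_comm]
    simpa only [hpow] using one_le_lintegral_rpow_mul_lintegral_rpow
      (f := fun y ↦ ENNReal.ofReal (exp (-u y))) (g := fun y ↦ ENNReal.ofReal (exp (u y)))
      hu.neg.exp.ennreal_ofReal hu.exp.ennreal_ofReal (ae_of_all _ hprod) hs
  rw [← ENNReal.mul_le_mul_iff_left hK0 hKtop]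
  calc ENNReal.ofReal (a ^ s) * K ^ s = ENNReal.ofReal (a * ∫ y, exp (-u y) ∂μ) ^ s := by
        rw [← hK, ← ENNReal.ofReal_rpow_of_nonneg ha hs.le, ← ENNReal.mul_rpow_of_nonneg _ _ hs.le,
          ← ENNReal.ofReal_mul ha]
    _ ≤ 1 := ENNReal.rpow_le_one (ENNReal.ofReal_le_one.mpr hau) hs.le
    _ ≤ _ := by rwa [mul_comm]

end

theorem harnack_implies_hyperboundedness_general {Ω : Type*} [MeasurableSpace Ω]
    (μ : Measure Ω) [IsProbabilityMeasure μ]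
    (α c : ℝ) (hα : 1 < α) (hc : 0 < c)
    (d : Ω → Ω → ℝ) (hdm : Measurable (Function.uncurry d))
    (F G : Ω → ℝ) (hF : ∀ x, 0 ≤ F x)
    (hHar : ∀ x y, F x ^ α ≤ G y * Real.exp (c * d x y ^ 2 / (α - 1)))
    (hG1 : ∫ y, G y ∂μ = 1) :
    (∀ x, F x ^ α * ∫ y, Real.exp (-(c * d x y ^ 2 / (α - 1))) ∂μ ≤ 1) ∧
    ∀ β, α < β →
      ∫⁻ x, ENNReal.ofReal (F x ^ β) ∂μ ≤
        ∫⁻ x, ∫⁻ y, ENNReal.ofReal (Real.exp ((β / (α - 1)) * c * d x y ^ 2)) ∂μ ∂μ := by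
  set u := fun x y ↦ c * d x y ^ 2 / (α - 1) with hu
  have hu_nonneg : ∀ x y, 0 ≤ u x y := fun x y ↦
    div_nonneg (mul_nonneg hc.le (sq_nonneg _)) (by linarith)
  have hu_meas : ∀ x, Measurable (u x) := fun x ↦
    (((hdm.comp measurable_prodMk_left).pow_const 2).const_mul c).div_const _
  have hint : ∀ x, Integrable (fun y ↦ exp (-u x y)) μ := fun x ↦
    .of_bound (hu_meas x).neg.exp.aestronglyMeasurable 1 (ae_of_all _ fun y ↦ by
      simpa [abs_of_pos (exp_pos _)] using hu_nonneg x y)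
  have hGint : Integrable G μ := .of_integral_ne_zero (by simp [hG1])
  have hFα : ∀ x, F x ^ α * ∫ y, exp (-u x y) ∂μ ≤ 1 := fun x ↦
    (mul_integral_exp_neg_le_integral (hint x) hGint (hHar x)).trans hG1.le
  refine ⟨hFα, fun β hβ ↦ lintegral_mono fun x ↦ ?_⟩
  have hα0 : 0 < α := by linarith
  have hβ0 : 0 < β := by linarith
  calc ENNReal.ofReal (F x ^ β) = ENNReal.ofReal ((F x ^ α) ^ (β / α)) := by
        rw [← Real.rpow_mul (hF x), mul_div_cancel₀ _ hα0.ne']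
    _ ≤ ∫⁻ y, ENNReal.ofReal (exp (β / α * u x y)) ∂μ :=
        ofReal_rpow_le_lintegral_exp_mul (hu_meas x).aemeasurable (hint x)
          (rpow_nonneg (hF x) α) (by positivity) (hFα x)
    _ ≤ _ := lintegral_mono fun y ↦ ENNReal.ofReal_le_ofReal <| exp_le_exp.mpr <|
        calc β / α * u x y ≤ β * u x y :=
              mul_le_mul_of_nonneg_right (div_le_self hβ0.le hα.le) (hu_nonneg x y)
          _ = β / (α - 1) * c * d x y ^ 2 := by simp only [hu]; ring

theorem harnack_implies_hyperboundedness {Ω : Type*} [MeasurableSpace Ω]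
    (μ : Measure Ω) [IsProbabilityMeasure μ]
    (t α c : ℝ) (ht : 0 < t) (hα : 1 < α) (hc : 0 < c)
    (d : Ω → Ω → ℝ) (hd : ∀ x y, 0 ≤ d x y) (hdm : Measurable (Function.uncurry d))
    (F G : Ω → ℝ) (hF : ∀ x, 0 ≤ F x) (hG : ∀ x, 0 ≤ G x)
    (hFm : Measurable F) (hGm : Measurable G)
    (hHar : ∀ x y, F x ^ α ≤ G y * Real.exp (c * d x y ^ 2 / (α - 1)))
    (hG1 : ∫ y, G y ∂μ = 1) :
    (∀ x, F x ^ α * ∫ y, Real.exp (-(c * d x y ^ 2 / (α - 1))) ∂μ ≤ 1) ∧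
    ∀ β, α < β →
      ∫⁻ x, ENNReal.ofReal (F x ^ β) ∂μ ≤
        ∫⁻ x, ∫⁻ y, ENNReal.ofReal (Real.exp ((β / (α - 1)) * c * d x y ^ 2)) ∂μ ∂μ :=
  harnack_implies_hyperboundedness_general μ α c hα hc d hdm F G hF hHar hG1
end
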